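/- arXiv:1801.03123 — 5 statements merged into one kernel-verified Lean document; each statement's English description precedes it below -/
import Mathlib

section
/- The operation $*_2$ on finitely supported matrix sequences defined by $(A *_2 B)_j = \sum_{k\in\mathbb{Z}} A_{j-2k} B_k$ satisfies $A *_2 (B *_2 C) = (A *_2 B) *_4 C$, where $(A *_4 C)_j = \sum_{k} A_{j-4k} C_k$. -/
/-!
For any strides `m, n`, both `A *ₘ (B *ₙ C)` and `(A *ₘ B) *ₘₙ C` at `j` are the double sum
`∑_{k,l} A_{j-mk} B_{k-nl} C_l`, the second one indexed by `(l, k - nl)`: the shear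
`k ↦ k + nl` turns `A_{j-mk}` into `A_{(j-mnl)-mk}`. Finiteness of the supports of `B` and `C`
makes this double sum finite, which justifies the interchanges.
-/

/-- Convolution with modulus `m` of matrix-valued sequences:
`(A *ₘ B)_j = ∑_k A_{j-mk} B_k`. -/
noncomputable def conv (d : ℕ) (m : ℤ) (A B : ℤ → Matrix (Fin (d+1)) (Fin (d+1)) ℝ) :
    ℤ → Matrix (Fin (d+1)) (Fin (d+1)) ℝ :=
  fun j => ∑ᶠ k : ℤ, A (j - m * k) * B k

open Function

noncomputable def stridedConv {R : Type*} [Semiring R] (m : ℤ) (f g : ℤ → R) (j : ℤ) : R :=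
  ∑ᶠ k, f (j - m * k) * g k

theorem conv_eq_stridedConv (d : ℕ) (m : ℤ) : conv d m = stridedConv m := rfl

namespace stridedConv

variable {R : Type*} [Semiring R] {g h : ℤ → R}

def shearEquiv (n : ℤ) : ℤ × ℤ ≃ ℤ × ℤ where
  toFun p := (p.2 + n * p.1, p.1)
  invFun q := (q.2, q.1 - n * q.2)
  left_inv p := by ext <;> simp
  right_inv q := by ext <;> simp

theorem right_nested_apply (hg : g.HasFiniteSupport) (hh : h.HasFiniteSupport)
    (m n : ℤ) (f : ℤ → R) (j : ℤ) :
    stridedConv m f (stridedConv n g h) j =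
      ∑ᶠ p : ℤ × ℤ, f (j - m * p.1) * (g (p.1 - n * p.2) * h p.2) := by
  have hsupp : (support fun p : ℤ × ℤ => f (j - m * p.1) * (g (p.1 - n * p.2) * h p.2)) ⊆
      shearEquiv n '' (h.support ×ˢ g.support) := by
    rintro ⟨k, l⟩ hkl
    refine ⟨(l, k - n * l), ⟨?_, ?_⟩, by simp [shearEquiv]⟩
    · exact right_ne_zero_of_mul (right_ne_zero_of_mul hkl)
    · exact left_ne_zero_of_mul (right_ne_zero_of_mul hkl)
  rw [finsum_curry _ (((hh.prod hg).image _).subset hsupp)]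
  refine finsum_congr fun k => mul_finsum' _ _ (hh.subset fun l hl => ?_)
  exact right_ne_zero_of_mul hl

theorem left_nested_apply (hg : g.HasFiniteSupport) (hh : h.HasFiniteSupport)
    (m n : ℤ) (f : ℤ → R) (j : ℤ) :
    stridedConv (m * n) (stridedConv m f g) h j =
      ∑ᶠ p : ℤ × ℤ, f (j - m * n * p.1 - m * p.2) * g p.2 * h p.1 := by
  have hsupp : (support fun p : ℤ × ℤ => f (j - m * n * p.1 - m * p.2) * g p.2 * h p.1) ⊆
      h.support ×ˢ g.support :=
    fun _ hp => ⟨right_ne_zero_of_mul hp, right_ne_zero_of_mul (left_ne_zero_of_mul hp)⟩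
  rw [finsum_curry _ ((hh.prod hg).subset hsupp)]
  refine finsum_congr fun l => finsum_mul' _ _ (hg.subset fun k hk => ?_)
  exact right_ne_zero_of_mul hk

theorem assoc (hg : g.HasFiniteSupport) (hh : h.HasFiniteSupport) (m n : ℤ) (f : ℤ → R) :
    stridedConv m f (stridedConv n g h) = stridedConv (m * n) (stridedConv m f g) h := by
  funext j
  rw [right_nested_apply hg hh, left_nested_apply hg hh,
    ← finsum_comp_equiv (shearEquiv n)]
  refine finsum_congr fun p => ?_
  simp only [shearEquiv, Equiv.coe_fn_mk, add_sub_cancel_right, mul_assoc]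
  congr 2
  ring

end stridedConv

theorem conv_two_assoc_general (d : ℕ) (A B C : ℤ → Matrix (Fin (d+1)) (Fin (d+1)) ℝ)
    (hB : (Function.support B).Finite)
    (hC : (Function.support C).Finite) :
    conv d 2 A (conv d 2 B C) = conv d 4 (conv d 2 A B) C := by
  rw [conv_eq_stridedConv, show (4 : ℤ) = 2 * 2 by norm_num]
  exact stridedConv.assoc hB hC 2 2 A

/-- `A *₂ (B *₂ C) = (A *₂ B) *₄ C`. -/
theorem conv_two_assoc (d : ℕ) (A B C : ℤ → Matrix (Fin (d+1)) (Fin (d+1)) ℝ)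
    (hA : (Function.support A).Finite) (hB : (Function.support B).Finite)
    (hC : (Function.support C).Finite) :
    conv d 2 A (conv d 2 B C) = conv d 4 (conv d 2 A B) C :=
  conv_two_assoc_general d A B C hB hC
end

section
/- Let $f \in C^d(\mathbb{R})$ and let $T_{p,\Lambda} f(x,h) = [1, h, \dots, h^p, e^{\lambda_1 h}, \dots, e^{\lambda_r h}] \, V_d^{-1} \, [f^{(j)}(x)]_{j=0}^d$ be the generalized Taylor expansion. Then for every $0 < R < 1$ there is a constant $C_{\Lambda,R}$ depending only on $\Lambda = \{\lambda_1,\dots,\lambda_r\}$ and $R$ such that $|T_{p,\Lambda} f(x,h) - T_d f(x,h)| \le C_{\Lambda,R} \, |v_f(x)|_2 \, |h|^{d+1}$ for all $x \in \mathbb{R}$ and $|h| \le R$, where $T_d f(x,h) = \sum_{j=0}^d \frac{f^{(j)}(x)}{j!} h^j$ is the classical Taylor polynomial and $v_f(x) = [f^{(j)}(x)]_{j=0}^d$. -/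
open scoped Matrix

/-- The confluent Vandermonde matrix `V_d` (`d = p + r`): columns `0,…,p` are
`j! e_j`, columns `p+1,…,d` are `[λ_k^i]_{i=0}^d`. -/
noncomputable def Vand (p r : ℕ) (l : Fin r → ℝ) :
    Matrix (Fin (p + r + 1)) (Fin (p + r + 1)) ℝ :=
  Matrix.of fun i c =>
    if hc : (c : ℕ) ≤ p then (if (i : ℕ) = (c : ℕ) then ((c : ℕ).factorial : ℝ) else 0)
    else l ⟨(c : ℕ) - (p + 1), by have := c.isLt; omega⟩ ^ (i : ℕ)

/-- The row vector `[1, h, …, h^p, e^{λ_1 h}, …, e^{λ_r h}]`. -/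
noncomputable def expBasis (p r : ℕ) (l : Fin r → ℝ) (h : ℝ) : Fin (p + r + 1) → ℝ :=
  fun c =>
    if hc : (c : ℕ) ≤ p then h ^ (c : ℕ)
    else Real.exp (l ⟨(c : ℕ) - (p + 1), by have := c.isLt; omega⟩ * h)

/-- The vector of derivatives `v_f(x) = [f^(j)(x)]_{j=0}^d`. -/
noncomputable def vder (d : ℕ) (f : ℝ → ℝ) (x : ℝ) : Fin (d + 1) → ℝ :=
  fun i => iteratedDeriv (i : ℕ) f x

/-- The generalized Taylor expansion
`T_{p,Λ} f (x,h) = [1,…,h^p,e^{λ_1 h},…,e^{λ_r h}] V_d⁻¹ v_f(x)`. -/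
noncomputable def Tgen (p r : ℕ) (l : Fin r → ℝ) (f : ℝ → ℝ) (x h : ℝ) : ℝ :=
  expBasis p r l h ⬝ᵥ ((Vand p r l)⁻¹ *ᵥ vder (p + r) f x)

/-- The classical Taylor polynomial `T_d f (x,h) = ∑_{j=0}^d f^(j)(x) h^j / j!`. -/
noncomputable def Tcl (d : ℕ) (f : ℝ → ℝ) (x h : ℝ) : ℝ :=
  ∑ j ∈ Finset.range (d + 1), iteratedDeriv j f x / (Nat.factorial j : ℝ) * h ^ j

/-- The Euclidean norm on `Fin n → ℝ`. -/
noncomputable def enorm2 (n : ℕ) (v : Fin n → ℝ) : ℝ := Real.sqrt (∑ i, v i ^ 2)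

/-!
Put `w = V_d⁻¹ v_f(x)`. The `c`-th column of `V_d` is the vector of derivatives at `0` of the
`c`-th basis function `φ_c ∈ {1, h, …, h^p, e^{λ_k h}}`, so `v_f(x) = V_d w` turns the classical
Taylor polynomial into `∑ w_c T_d φ_c(h)`, while `T_{p,Λ} f(x,h) = ∑ w_c φ_c(h)`. The monomials
equal their Taylor polynomials, `|e^{λh} - T_d e^{λ·}(h)| ≤ |λ|^{d+1} e^{|λ|} |h|^{d+1}` for
`|h| ≤ 1`, and each `|w_c|` is at most the `c`-th absolute row sum of `V_d⁻¹` times `|v_f(x)|₂`.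

`V_d` is invertible: if `a V_d = 0`, the polynomial with coefficient vector `a` has degree `≤ d`,
is divisible by `X^{p+1}` and vanishes at the `r` distinct nonzero `λ_k`, hence is zero.
-/

open Finset Polynomial Matrix

lemma Real.abs_exp_sub_sum_range_le (x : ℝ) (n : ℕ) :
    |Real.exp x - ∑ m ∈ range n, x ^ m / m.factorial| ≤ |x| ^ n * Real.exp |x| := by
  have := Complex.norm_exp_sub_sum_le_norm_mul_exp x n
  rw [← Complex.ofReal_exp] at this
  exact_mod_cast this

lemma Real.abs_exp_mul_sub_sum_range_le (a : ℝ) {h : ℝ} (hh : |h| ≤ 1) (n : ℕ) :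
    |Real.exp (a * h) - ∑ m ∈ range n, (a * h) ^ m / m.factorial| ≤
      |a| ^ n * Real.exp |a| * |h| ^ n := by
  have hexp : Real.exp (|a| * |h|) ≤ Real.exp |a| :=
    Real.exp_le_exp.2 (mul_le_of_le_one_right (abs_nonneg a) hh)
  calc _ ≤ |a * h| ^ n * Real.exp |a * h| := Real.abs_exp_sub_sum_range_le _ n
    _ = |a| ^ n * Real.exp (|a| * |h|) * |h| ^ n := by rw [abs_mul, mul_pow]; ring
    _ ≤ |a| ^ n * Real.exp |a| * |h| ^ n := by gcongr

lemma Polynomial.eval_ofFn {R : Type*} [CommSemiring R] [DecidableEq R] {n : ℕ}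
    (v : Fin n → R) (x : R) : (ofFn n v).eval x = ∑ i, v i * x ^ (i : ℕ) := by
  simp [ofFn_eq_sum_monomial, eval_finsetSum]

lemma Polynomial.eq_zero_of_X_pow_dvd_of_eval_eq_zero {R : Type*} [CommRing R] [IsDomain R]
    {P : R[X]} {m : ℕ} {ι : Type*} [Fintype ι] {f : ι → R} (hf : Function.Injective f)
    (hf0 : ∀ i, f i ≠ 0) (hdvd : X ^ m ∣ P) (heval : ∀ i, P.eval (f i) = 0)
    (hdeg : P.natDegree < m + Fintype.card ι) : P = 0 := by
  obtain ⟨Q, rfl⟩ := hdvd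
  suffices Q = 0 by rw [this, mul_zero]
  by_contra hQ
  refine hQ (Q.eq_zero_of_natDegree_lt_card_of_eval_eq_zero hf (fun i => ?_) ?_)
  · have := heval i
    rw [eval_mul, eval_X_pow] at this
    exact (mul_eq_zero.1 this).resolve_left (pow_ne_zero _ (hf0 i))
  · rw [natDegree_mul (pow_ne_zero _ X_ne_zero) hQ, natDegree_X_pow] at hdeg
    omega

section Vand

variable {p r : ℕ} {l : Fin r → ℝ}

lemma vecMul_Vand_apply_of_le (a : Fin (p + r + 1) → ℝ) {c : Fin (p + r + 1)} (hc : (c : ℕ) ≤ p) :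
    (a ᵥ* Vand p r l) c = a c * (c : ℕ).factorial := by
  rw [vecMul, dotProduct, sum_eq_single c]
  · simp [Vand, hc]
  · intro i _ hi
    simp [Vand, hc, Fin.val_ne_of_ne hi]
  · simp

lemma vecMul_Vand_apply_of_lt (a : Fin (p + r + 1) → ℝ) {c : Fin (p + r + 1)} (hc : p < c) :
    (a ᵥ* Vand p r l) c = ∑ i, a i * l ⟨c - (p + 1), by omega⟩ ^ (i : ℕ) := by
  simp [vecMul, dotProduct, Vand, hc.not_ge]

theorem Vand_det_ne_zero (h0 : ∀ k, l k ≠ 0) (hinj : Function.Injective l) :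
    (Vand p r l).det ≠ 0 := by
  classical
  intro hdet
  obtain ⟨a, ha, hVa⟩ := exists_vecMul_eq_zero_iff.2 hdet
  have hpoly : ∀ c : Fin (p + r + 1), (c : ℕ) ≤ p → a c = 0 := fun c hc => by
    simpa [vecMul_Vand_apply_of_le a hc, Nat.factorial_ne_zero] using congrFun hVa c
  have hexp : ∀ k, (ofFn _ a).eval (l k) = 0 := fun k => by
    have := congrFun hVa ⟨p + 1 + k, by omega⟩
    rw [vecMul_Vand_apply_of_lt a (by simp; omega)] at this
    simpa [eval_ofFn] using this
  have hdvd : X ^ (p + 1) ∣ ofFn _ a := X_pow_dvd_iff.2 fun j hj => by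
    rw [ofFn_coeff_eq_val_of_lt a (by omega)]
    exact hpoly _ (by simp; omega)
  have hdeg : (ofFn _ a).natDegree < p + 1 + Fintype.card (Fin r) := by
    simpa [add_right_comm] using ofFn_natDegree_lt (by omega) a
  exact ha (injective_ofFn _ (by
    rw [eq_zero_of_X_pow_dvd_of_eval_eq_zero hinj h0 hdvd hexp hdeg, map_zero]))

end Vand

noncomputable def taylorRow (d : ℕ) (h : ℝ) : Fin (d + 1) → ℝ :=
  fun j => h ^ (j : ℕ) / (j : ℕ).factorial

lemma Tcl_eq_taylorRow_dotProduct (d : ℕ) (f : ℝ → ℝ) (x h : ℝ) :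
    Tcl d f x h = taylorRow d h ⬝ᵥ vder d f x := by
  rw [Tcl, ← Fin.sum_univ_eq_sum_range (fun j => iteratedDeriv j f x / j.factorial * h ^ j)]
  exact sum_congr rfl fun j _ => by simp only [taylorRow, vder]; ring

lemma Tgen_sub_Tcl_eq {p r : ℕ} {l : Fin r → ℝ} (hdet : IsUnit (Vand p r l).det)
    (f : ℝ → ℝ) (x h : ℝ) :
    Tgen p r l f x h - Tcl (p + r) f x h =
      (expBasis p r l h - taylorRow (p + r) h ᵥ* Vand p r l) ⬝ᵥ
        ((Vand p r l)⁻¹ *ᵥ vder (p + r) f x) := by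
  rw [Tgen, Tcl_eq_taylorRow_dotProduct, sub_dotProduct, ← dotProduct_mulVec, mulVec_mulVec,
    mul_nonsing_inv _ hdet, one_mulVec]

lemma abs_expBasis_sub_taylorRow_vecMul_Vand_le {p r : ℕ} (l : Fin r → ℝ) {h : ℝ}
    (hh : |h| ≤ 1) (c : Fin (p + r + 1)) :
    |(expBasis p r l h - taylorRow (p + r) h ᵥ* Vand p r l) c| ≤
      (∑ k, |l k| ^ (p + r + 1) * Real.exp |l k|) * |h| ^ (p + r + 1) := by
  rw [Pi.sub_apply]
  rcases le_or_gt (c : ℕ) p with hc | hc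
  · have hfact : ((c : ℕ).factorial : ℝ) ≠ 0 := Nat.cast_ne_zero.2 (Nat.factorial_ne_zero _)
    rw [vecMul_Vand_apply_of_le _ hc, expBasis, dif_pos hc, taylorRow, div_mul_cancel₀ _ hfact,
      sub_self, abs_zero]
    positivity
  · set k : Fin r := ⟨c - (p + 1), by omega⟩
    have htaylor : (taylorRow (p + r) h ᵥ* Vand p r l) c =
        ∑ m ∈ range (p + r + 1), (l k * h) ^ m / m.factorial := by
      rw [vecMul_Vand_apply_of_lt _ hc, ← Fin.sum_univ_eq_sum_range]
      exact sum_congr rfl fun j _ => by simp only [taylorRow]; ring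
    rw [htaylor, expBasis, dif_neg hc.not_ge]
    refine (Real.abs_exp_mul_sub_sum_range_le (l k) hh _).trans ?_
    gcongr
    exact single_le_sum (f := fun k => |l k| ^ (p + r + 1) * Real.exp |l k|)
      (fun _ _ => by positivity) (mem_univ k)

lemma abs_le_enorm2 {n : ℕ} (v : Fin n → ℝ) (i : Fin n) : |v i| ≤ enorm2 n v := by
  rw [enorm2, ← Real.sqrt_sq_eq_abs]
  exact Real.sqrt_le_sqrt (single_le_sum (f := fun j => v j ^ 2) (fun _ _ => sq_nonneg _)
    (mem_univ i))

lemma abs_dotProduct_mulVec_le {ι : Type*} [Fintype ι] {n : ℕ} {e : ι → ℝ} {t : ℝ}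
    (he : ∀ i, |e i| ≤ t) (M : Matrix ι (Fin n) ℝ) (v : Fin n → ℝ) :
    |e ⬝ᵥ (M *ᵥ v)| ≤ t * (∑ i, ∑ j, |M i j|) * enorm2 n v := by
  calc |e ⬝ᵥ (M *ᵥ v)| = |∑ i, ∑ j, e i * (M i j * v j)| := by
        simp only [dotProduct, mulVec, mul_sum]
    _ ≤ ∑ i, ∑ j, |e i| * (|M i j| * |v j|) := by
        refine (abs_sum_le_sum_abs _ _).trans (sum_le_sum fun i _ => ?_)
        refine (abs_sum_le_sum_abs _ _).trans_eq (sum_congr rfl fun j _ => ?_)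
        rw [abs_mul, abs_mul]
    _ ≤ ∑ i, ∑ j, t * (|M i j| * enorm2 n v) := by
        gcongr with i _ j _
        · exact (abs_nonneg _).trans (he i)
        · exact he i
        · exact abs_le_enorm2 v j
    _ = t * (∑ i, ∑ j, |M i j|) * enorm2 n v := by
        simp only [← mul_sum, ← sum_mul]; ring

theorem tgen_sub_taylor_bound_general (p r : ℕ) (l : Fin r → ℝ)
    (h0 : ∀ k, l k ≠ 0) (hinj : Function.Injective l)
    (R : ℝ) (hR1 : R < 1) :
    ∃ C > 0, ∀ f : ℝ → ℝ, ContDiff ℝ (p + r : ℕ) f → ∀ x h : ℝ, |h| ≤ R →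
      |Tgen p r l f x h - Tcl (p + r) f x h| ≤
        C * enorm2 (p + r + 1) (vder (p + r) f x) * |h| ^ (p + r + 1) := by
  set E := ∑ k, |l k| ^ (p + r + 1) * Real.exp |l k|
  set S := ∑ i, ∑ j, |(Vand p r l)⁻¹ i j|
  refine ⟨E * S + 1, by positivity, fun f _ x h hhR => ?_⟩
  have hdet : IsUnit (Vand p r l).det := (Vand_det_ne_zero h0 hinj).isUnit
  have herr := abs_expBasis_sub_taylorRow_vecMul_Vand_le (p := p) l (hhR.trans hR1.le)
  have hN : 0 ≤ enorm2 (p + r + 1) (vder (p + r) f x) := Real.sqrt_nonneg _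
  rw [Tgen_sub_Tcl_eq hdet]
  calc _ ≤ E * |h| ^ (p + r + 1) * S * enorm2 (p + r + 1) (vder (p + r) f x) :=
        abs_dotProduct_mulVec_le herr _ _
    _ ≤ (E * S + 1) * enorm2 (p + r + 1) (vder (p + r) f x) * |h| ^ (p + r + 1) := by
        nlinarith [pow_nonneg (abs_nonneg h) (p + r + 1)]

/-- error bound for the generalized Taylor expansion: for any
`0 < R < 1` there is a constant `C` depending only on `Λ` and `R` with
`|T_{p,Λ} f(x,h) - T_d f(x,h)| ≤ C |v_f(x)|₂ |h|^{d+1}` for `|h| ≤ R`. -/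
theorem tgen_sub_taylor_bound (p r : ℕ) (hr : 1 ≤ r) (l : Fin r → ℝ)
    (h0 : ∀ k, l k ≠ 0) (hinj : Function.Injective l)
    (R : ℝ) (hR0 : 0 < R) (hR1 : R < 1) :
    ∃ C > 0, ∀ f : ℝ → ℝ, ContDiff ℝ (p + r : ℕ) f → ∀ x h : ℝ, |h| ≤ R →
      |Tgen p r l f x h - Tcl (p + r) f x h| ≤
        C * enorm2 (p + r + 1) (vder (p + r) f x) * |h| ^ (p + r + 1) :=
  tgen_sub_taylor_bound_general p r l h0 hinj R hR1
end

section
/- The columns of the confluent Vandermonde matrix $V_d$ satisfy the expansion identity: the vector of functions $[1, x, \dots, x^p, e^{\lambda_1 x}, \dots, e^{\lambda_r x}]^T$ equals $\sum_{k=0}^{\infty} V_d^T\,(M_\Lambda^T)^k\, [x^{k(d+1)+j}/(k(d+1)+j)!]_{j=0}^d$ viewed entrywise, i.e., $[x^j]_{j=0}^p$ stacked over $[e^{\lambda_j x}]_{j=1}^r$ equals $[V_d^T \mid M_\Lambda V_d^T \mid M_\Lambda^2 V_d^T \mid \cdots]\,[x^j/j!]_{j\in\mathbb{N}}$. -/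
/-!
Compare entries. Since `M_Λ` is diagonal, entry `c` of the `k`-th term is `(M_Λ)_cc^k` times
column `c` of `V_d` paired with `[x^{k(d+1)+j}/(k(d+1)+j)!]_j`. A polynomial column `c! e_c` picks
out `x^{k(d+1)+c}`, which survives only for `k = 0` because `(M_Λ)_cc = 0`. For an exponential
column with node `λ`, the `k`-th term is `∑_j (λx)^{k(d+1)+j}/(k(d+1)+j)!`, so the series is the
exponential series of `λx` summed in consecutive blocks of length `d + 1`.
-/

open scoped Matrix

/-- The diagonal matrix `M_Λ = diag(0,…,0,λ_1^{d+1},…,λ_r^{d+1})`. -/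
noncomputable def Mdiag (p r : ℕ) (l : Fin r → ℝ) :
    Matrix (Fin (p + r + 1)) (Fin (p + r + 1)) ℝ :=
  Matrix.diagonal fun c =>
    if hc : (c : ℕ) ≤ p then 0
    else l ⟨(c : ℕ) - (p + 1), by have := c.isLt; omega⟩ ^ (p + r + 1)

theorem HasSum.sum_fin_blocks {α : Type*} [AddCommMonoid α] [TopologicalSpace α]
    [ContinuousAdd α] [RegularSpace α] {f : ℕ → α} {a : α} (hf : HasSum f a)
    (n : ℕ) [NeZero n] : HasSum (fun k : ℕ => ∑ j : Fin n, f (k * n + j)) a := by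
  have hprod : HasSum (fun q : ℕ × Fin n => f (q.1 * n + q.2)) a := by
    simpa [Nat.divModEquiv, Function.comp_def] using
      (Nat.divModEquiv n).symm.hasSum_iff.2 hf
  exact hprod.prod_fiberwise fun k => hasSum_fintype _

theorem Real.hasSum_exp_fin_blocks (n : ℕ) [NeZero n] (y : ℝ) :
    HasSum (fun k : ℕ => ∑ j : Fin n, y ^ (k * n + j) / (k * n + j).factorial)
      (Real.exp y) := by
  rw [Real.exp_eq_exp_ℝ]
  exact (NormedSpace.expSeries_div_hasSum_exp y).sum_fin_blocks n

theorem Matrix.diagonal_pow_mul_transpose_mulVec_apply {n R : Type*} [Fintype n]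
    [DecidableEq n] [CommSemiring R] (d : n → R) (k : ℕ) (A : Matrix n n R) (v : n → R)
    (c : n) : ((Matrix.diagonal d ^ k * Aᵀ) *ᵥ v) c = d c ^ k * ∑ i, A i c * v i := by
  rw [← Matrix.mulVec_mulVec, Matrix.diagonal_pow, Matrix.mulVec_diagonal]
  simp [Matrix.mulVec, dotProduct, Matrix.transpose_apply]

section Vand

variable {p r : ℕ} (l : Fin r → ℝ) {c : Fin (p + r + 1)}

theorem sum_Vand_mul_of_le (hc : (c : ℕ) ≤ p) (v : Fin (p + r + 1) → ℝ) :
    ∑ i, Vand p r l i c * v i = (c : ℕ).factorial * v c := by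
  rw [Finset.sum_eq_single c]
  · simp [Vand, hc]
  · intro i _ hi
    simp [Vand, hc, Fin.val_ne_of_ne hi]
  · simp

theorem Vand_apply_of_not_le (hc : ¬(c : ℕ) ≤ p) (i : Fin (p + r + 1)) :
    Vand p r l i c = l ⟨(c : ℕ) - (p + 1), by omega⟩ ^ (i : ℕ) := by
  simp [Vand, hc]

end Vand

theorem expBasis_expansion_general (p r : ℕ) (l : Fin r → ℝ) (x : ℝ) :
    expBasis p r l x =
      ∑' k : ℕ, ((Mdiag p r l) ^ k * (Vand p r l)ᵀ) *ᵥ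
        (fun j : Fin (p + r + 1) =>
          x ^ (k * (p + r + 1) + (j : ℕ)) /
            (Nat.factorial (k * (p + r + 1) + (j : ℕ)) : ℝ)) := by
  refine (Pi.hasSum.2 fun c => ?_).tsum_eq.symm
  simp only [Mdiag, Matrix.diagonal_pow_mul_transpose_mulVec_apply]
  by_cases hc : (c : ℕ) ≤ p
  · have hterm : ∀ k : ℕ, (0 : ℝ) ^ k * ∑ i, Vand p r l i c *
        (x ^ (k * (p + r + 1) + (i : ℕ)) / (k * (p + r + 1) + (i : ℕ)).factorial) =
        if k = 0 then x ^ (c : ℕ) else 0 := by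
      rintro (_ | k)
      · simpa [sum_Vand_mul_of_le l hc] using
          mul_div_cancel₀ (x ^ (c : ℕ)) (Nat.cast_ne_zero.2 (c : ℕ).factorial_ne_zero)
      · simp
    simpa only [expBasis, dif_pos hc, hterm] using hasSum_ite_eq 0 (x ^ (c : ℕ))
  · simp only [expBasis, dif_neg hc]
    set μ := l ⟨(c : ℕ) - (p + 1), by omega⟩
    have hterm : ∀ k : ℕ, (μ ^ (p + r + 1)) ^ k * ∑ i, Vand p r l i c *
        (x ^ (k * (p + r + 1) + (i : ℕ)) / (k * (p + r + 1) + (i : ℕ)).factorial) =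
        ∑ i : Fin (p + r + 1), (μ * x) ^ (k * (p + r + 1) + (i : ℕ)) /
          (k * (p + r + 1) + (i : ℕ)).factorial := by
      intro k
      simp only [Finset.mul_sum, Vand_apply_of_not_le l hc, mul_pow, pow_add, ← pow_mul]
      refine Finset.sum_congr rfl fun i _ => ?_
      ring
    simpa only [hterm] using Real.hasSum_exp_fin_blocks (p + r + 1) (μ * x)

/-- the expansion identity
`[x^j]_{j≤p} ⊕ [e^{λ_k x}] = ∑_{k=0}^∞ (M_Λ^k V_dᵀ) [x^{k(d+1)+j}/(k(d+1)+j)!]_j`. -/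
theorem expBasis_expansion (p r : ℕ) (hr : 1 ≤ r) (l : Fin r → ℝ)
    (h0 : ∀ k, l k ≠ 0) (hinj : Function.Injective l) (x : ℝ) :
    expBasis p r l x =
      ∑' k : ℕ, ((Mdiag p r l) ^ k * (Vand p r l)ᵀ) *ᵥ
        (fun j : Fin (p + r + 1) =>
          x ^ (k * (p + r + 1) + (j : ℕ)) /
            (Nat.factorial (k * (p + r + 1) + (j : ℕ)) : ℝ)) :=
  expBasis_expansion_general p r l x
end

section
/- The generalized Taylor operator commutes with differentiation in the first $p$ orders: for $f \in C^d(\mathbb{R})$ and $j = 0,\dots,p$, the $j$-th derivative with respect to $h$ satisfies $\frac{\partial^j}{\partial h^j} T_{p,\Lambda} f(x,h) = T_{p-j,\Lambda} f^{(j)}(x,h)$, where the right side is the generalized Taylor operator of order $p-j$ (with the same frequencies $\Lambda$) applied to $f^{(j)}$. -/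
open scoped Matrix

/-! The columns of `V_{p+r}` are the Taylor data `[φ_c^{(i)}(0)]_{i ≤ p+r}` of the basis functions
`φ = [1, h, …, h^p, e^{λ_1 h}, …, e^{λ_r h}]`, so `T_{p,Λ} g(x,·)` is the unique combination of
them whose derivatives of order `≤ p + r` at `0` are the `g^{(i)}(x)`; this uses
`det V_{p+r} = ∏ i! · ∏ λ_k^{p+1} · det V(λ) ≠ 0`. For `j ≤ p`, `∂_h^j` maps combinations of the
order-`p` basis to combinations of the order-`(p - j)` basis, and `∂_h^j T_{p,Λ} f(x,·)` has the
Taylor data `f^{(i+j)}(x)` of `f^{(j)}` at `0`, so by uniqueness it is `T_{p-j,Λ} f^{(j)}(x,·)`. -/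

open Matrix

theorem iteratedDeriv_iteratedDeriv {𝕜 F : Type*} [NontriviallyNormedField 𝕜]
    [NormedAddCommGroup F] [NormedSpace 𝕜 F] (i j : ℕ) (f : 𝕜 → F) :
    iteratedDeriv i (iteratedDeriv j f) = iteratedDeriv (i + j) f := by
  simp only [iteratedDeriv_eq_iterate, Function.iterate_add_apply]

noncomputable def expComb (p r : ℕ) (l : Fin r → ℝ) (a : Fin (p + r + 1) → ℝ) (t : ℝ) : ℝ :=
  expBasis p r l t ⬝ᵥ a

theorem expBasis_apply_of_le {p r : ℕ} (l : Fin r → ℝ) {c : Fin (p + r + 1)}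
    (hc : (c : ℕ) ≤ p) :
    (fun t => expBasis p r l t c) = fun t => t ^ (c : ℕ) := by
  ext t; simp [expBasis, hc]

theorem expBasis_apply_of_lt {p r : ℕ} (l : Fin r → ℝ) {c : Fin (p + r + 1)} (hc : p < c) :
    (fun t => expBasis p r l t c) =
      fun t => Real.exp (l ⟨(c : ℕ) - (p + 1), by omega⟩ * t) := by
  ext t; simp [expBasis, hc.not_ge]

theorem contDiff_expBasis_apply (p r : ℕ) (l : Fin r → ℝ) (c : Fin (p + r + 1))
    {n : WithTop ℕ∞} : ContDiff ℝ n (fun t => expBasis p r l t c) := by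
  rcases le_or_gt (c : ℕ) p with hc | hc
  · rw [expBasis_apply_of_le l hc]; fun_prop
  · rw [expBasis_apply_of_lt l hc]; fun_prop

theorem iteratedDeriv_expComb (p r : ℕ) (l : Fin r → ℝ) (a : Fin (p + r + 1) → ℝ) (n : ℕ)
    (x : ℝ) :
    iteratedDeriv n (expComb p r l a) x =
      (fun c => iteratedDeriv n (fun t => expBasis p r l t c) x) ⬝ᵥ a := by
  change iteratedDeriv n (fun t => ∑ c, expBasis p r l t c * a c) x = _
  rw [iteratedDeriv_fun_sum fun c _ =>
    ((contDiff_expBasis_apply p r l c).mul contDiff_const).contDiffAt]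
  simp [dotProduct]

theorem iteratedDeriv_expBasis_apply_zero (p r : ℕ) (l : Fin r → ℝ) (i c : Fin (p + r + 1)) :
    iteratedDeriv i (fun t => expBasis p r l t c) 0 = Vand p r l i c := by
  rcases le_or_gt (c : ℕ) p with hc | hc
  · rw [expBasis_apply_of_le l hc, iteratedDeriv_fun_pow_zero]
    simp [Vand, hc]
  · rw [expBasis_apply_of_lt l hc, iteratedDeriv_exp_const_mul]
    simp [Vand, hc.not_ge]

/-- Row `i`, column `c`: the coefficient of the `i`-th order-`(p - j)` basis function in the
`j`-th derivative of the `c`-th order-`p` basis function. For `c < j` the truncated row index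
`c - j` is `0`, and the entry `c.descFactorial j` vanishes as it should. -/
noncomputable def derivMatrix (p r j : ℕ) (l : Fin r → ℝ) :
    Matrix (Fin (p - j + r + 1)) (Fin (p + r + 1)) ℝ :=
  Matrix.of fun i c =>
    if (i : ℕ) = (c : ℕ) - j then
      if hc : (c : ℕ) ≤ p then ((c : ℕ).descFactorial j : ℝ)
      else l ⟨(c : ℕ) - (p + 1), by omega⟩ ^ j
    else 0

theorem iteratedDeriv_expBasis_apply {p r j : ℕ} (hj : j ≤ p) (l : Fin r → ℝ)
    (c : Fin (p + r + 1)) (h : ℝ) :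
    iteratedDeriv j (fun t => expBasis p r l t c) h =
      (expBasis (p - j) r l h ᵥ* derivMatrix p r j l) c := by
  have hcj : (c : ℕ) - j < p - j + r + 1 := by omega
  rw [vecMul, dotProduct, Finset.sum_eq_single ⟨(c : ℕ) - j, hcj⟩
    (fun i _ hi => by simp [derivMatrix, Fin.ext_iff.not.mp hi]) (by simp)]
  rcases le_or_gt (c : ℕ) p with hc | hc
  · rw [expBasis_apply_of_le l hc, iteratedDeriv_pow]
    simp [derivMatrix, expBasis, hc, show (c : ℕ) - j ≤ p - j by omega, mul_comm]
  · rw [expBasis_apply_of_lt l hc, iteratedDeriv_exp_const_mul]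
    have hidx : (c : ℕ) - j - (p - j + 1) = (c : ℕ) - (p + 1) := by omega
    simp [derivMatrix, expBasis, hc.not_ge, show ¬ (c : ℕ) - j ≤ p - j by omega, hidx]
    ring

def polyExpEquiv (p r : ℕ) : Fin (p + 1) ⊕ Fin r ≃ Fin (p + r + 1) :=
  finSumFinEquiv.trans (finCongr (by omega))

theorem det_Vand (p r : ℕ) (l : Fin r → ℝ) :
    (Vand p r l).det =
      (∏ i : Fin (p + 1), ((i : ℕ).factorial : ℝ)) * (∏ k, l k ^ (p + 1)) *
        (vandermonde l).det := by
  rw [← det_reindex_self (polyExpEquiv p r).symm]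
  set A := reindex (polyExpEquiv p r).symm (polyExpEquiv p r).symm (Vand p r l)
  have hexpCol : ∀ k : ℕ, ¬ p + 1 + k ≤ p := by omega
  have h21 : A.toBlocks₂₁ = 0 := by
    ext k i
    simp [A, polyExpEquiv, toBlocks₂₁, Vand, i.is_le]
    omega
  have h11 : A.toBlocks₁₁ = diagonal fun i : Fin (p + 1) => ((i : ℕ).factorial : ℝ) := by
    ext i i'
    simp [A, polyExpEquiv, toBlocks₁₁, Vand, diagonal, i'.is_le, Fin.ext_iff]
    split_ifs with h <;> simp [h]
  have h22 : A.toBlocks₂₂ = (vandermonde l)ᵀ * diagonal fun k => l k ^ (p + 1) := by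
    ext k k'
    simp [A, polyExpEquiv, toBlocks₂₂, Vand, hexpCol]
    ring
  rw [← fromBlocks_toBlocks A, h21, det_fromBlocks_zero₂₁, h11, h22]
  simp [det_diagonal, mul_assoc, mul_comm]

theorem det_Vand_ne_zero (p : ℕ) {r : ℕ} {l : Fin r → ℝ} (h0 : ∀ k, l k ≠ 0)
    (hinj : Function.Injective l) : (Vand p r l).det ≠ 0 := by
  rw [det_Vand]
  refine mul_ne_zero (mul_ne_zero ?_ ?_) (Matrix.det_vandermonde_ne_zero_iff.mpr hinj)
  · exact Finset.prod_ne_zero_iff.mpr fun i _ => Nat.cast_ne_zero.mpr (Nat.factorial_ne_zero _)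
  · exact Finset.prod_ne_zero_iff.mpr fun k _ => pow_ne_zero _ (h0 k)

theorem iteratedDeriv_expComb_zero (p r : ℕ) (l : Fin r → ℝ) (a : Fin (p + r + 1) → ℝ)
    (i : Fin (p + r + 1)) :
    iteratedDeriv i (expComb p r l a) 0 = (Vand p r l *ᵥ a) i := by
  simp [iteratedDeriv_expComb, iteratedDeriv_expBasis_apply_zero, mulVec]

theorem iteratedDeriv_expComb_eq {p r j : ℕ} (hj : j ≤ p) (l : Fin r → ℝ)
    (a : Fin (p + r + 1) → ℝ) :
    iteratedDeriv j (expComb p r l a) = expComb (p - j) r l (derivMatrix p r j l *ᵥ a) := by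
  ext h
  simp only [iteratedDeriv_expComb, iteratedDeriv_expBasis_apply hj, expComb, dotProduct_mulVec]

theorem Tgen_eq_expComb (p r : ℕ) (l : Fin r → ℝ) (g : ℝ → ℝ) (x : ℝ) :
    Tgen p r l g x = expComb p r l ((Vand p r l)⁻¹ *ᵥ vder (p + r) g x) :=
  rfl

theorem iteratedDeriv_Tgen_zero {p r : ℕ} {l : Fin r → ℝ} (hV : (Vand p r l).det ≠ 0)
    (g : ℝ → ℝ) (x : ℝ) (i : Fin (p + r + 1)) :
    iteratedDeriv i (Tgen p r l g x) 0 = iteratedDeriv i g x := by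
  rw [Tgen_eq_expComb, iteratedDeriv_expComb_zero, mulVec_mulVec,
    mul_nonsing_inv _ (isUnit_iff_ne_zero.mpr hV), one_mulVec]
  rfl

theorem expComb_eq_Tgen {p r : ℕ} {l : Fin r → ℝ} (hV : (Vand p r l).det ≠ 0)
    {a : Fin (p + r + 1) → ℝ} {g : ℝ → ℝ} {x : ℝ}
    (ha : ∀ i : Fin (p + r + 1), iteratedDeriv i (expComb p r l a) 0 = iteratedDeriv i g x) :
    expComb p r l a = Tgen p r l g x := by
  have hVa : Vand p r l *ᵥ a = vder (p + r) g x := funext fun i => by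
    rw [← iteratedDeriv_expComb_zero, ha]; rfl
  rw [Tgen_eq_expComb, ← hVa, mulVec_mulVec, nonsing_inv_mul _ (isUnit_iff_ne_zero.mpr hV),
    one_mulVec]

theorem tgen_deriv_commute_general (p r : ℕ) (l : Fin r → ℝ)
    (h0 : ∀ k, l k ≠ 0) (hinj : Function.Injective l)
    (f : ℝ → ℝ)
    (j : ℕ) (hj : j ≤ p) (x h : ℝ) :
    iteratedDeriv j (fun t => Tgen p r l f x t) h =
      Tgen (p - j) r l (iteratedDeriv j f) x h := by
  have hV : ∀ q, (Vand q r l).det ≠ 0 := fun q => det_Vand_ne_zero q h0 hinj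
  suffices expComb (p - j) r l (derivMatrix p r j l *ᵥ (Vand p r l)⁻¹ *ᵥ vder (p + r) f x) =
      Tgen (p - j) r l (iteratedDeriv j f) x by
    rw [Tgen_eq_expComb, iteratedDeriv_expComb_eq hj, this]
  refine expComb_eq_Tgen (hV _) fun i => ?_
  rw [← iteratedDeriv_expComb_eq hj, ← Tgen_eq_expComb, iteratedDeriv_iteratedDeriv,
    iteratedDeriv_iteratedDeriv]
  exact iteratedDeriv_Tgen_zero (hV p) f x ⟨i + j, by omega⟩

/-- for `j = 0,…,p` the generalized Taylor operator commutes with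
differentiation: `∂_h^j T_{p,Λ} f (x,h) = T_{p-j,Λ} f^(j) (x,h)`. -/
theorem tgen_deriv_commute (p r : ℕ) (hr : 1 ≤ r) (l : Fin r → ℝ)
    (h0 : ∀ k, l k ≠ 0) (hinj : Function.Injective l)
    (f : ℝ → ℝ) (hf : ContDiff ℝ (p + r : ℕ) f)
    (j : ℕ) (hj : j ≤ p) (x h : ℝ) :
    iteratedDeriv j (fun t => Tgen p r l f x t) h =
      Tgen (p - j) r l (iteratedDeriv j f) x h :=
  tgen_deriv_commute_general p r l h0 hinj f j hj x h
end

section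
/- If a sequence of $C^d$-convergent Hermite subdivision schemes $S(A^{[n+\ell]} : n \ge 0)$, $\ell \ge 0$, has basic limit functions $F^{[\ell]}$ (obtained from initial data $\delta I_{d+1}$), then these satisfy the level-dependent refinement equation $F^{[\ell]} = \sum_{k\in\mathbb{Z}} D^{-1} F^{[\ell+1]}(2\,\cdot - k)\, A^{[\ell]}_k$ for all $\ell \ge 0$. -/
/-!
Unrolling one step of the scheme started at level `ℓ` shows that its data at level `n + 1`
are the data at level `n` of the scheme started at `ℓ + 1`, shifted by `2^n k` and weighted by
`A^[ℓ]_k`:  `B^[ℓ]_{n+1}(j) = ∑_k B^[ℓ+1]_n(j - 2^n k) A^[ℓ]_k`.  After multiplying by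
`D^{-(n+1)}` and evaluating at `j = ⌊2^{n+1} t⌋`, the left side tends to `F^[ℓ](t)` and each
of the finitely many terms on the right to `D⁻¹ F^[ℓ+1](2t - k) A^[ℓ]_k`, since
`(j - 2^n k) / 2^n → 2t - k`.
-/

open scoped Matrix

/-- The diagonal matrix `D = diag(1, 1/2, …, 2^{-d})`. -/
noncomputable def Dmat (d : ℕ) : Matrix (Fin (d+1)) (Fin (d+1)) ℝ :=
  Matrix.diagonal fun i => ((2 : ℝ) ^ (i : ℕ))⁻¹

/-- The right-associative iterated mask product
`iterMask A ℓ m = A^[ℓ+m-1] *₂ ⋯ *₂ A^[ℓ]` (with `iterMask A ℓ 0 = δ I`). -/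
noncomputable def iterMask (d : ℕ) (A : ℕ → ℤ → Matrix (Fin (d+1)) (Fin (d+1)) ℝ)
    (ℓ : ℕ) : ℕ → ℤ → Matrix (Fin (d+1)) (Fin (d+1)) ℝ
  | 0 => fun k => if k = 0 then 1 else 0
  | m + 1 => conv d 2 (A (ℓ + m)) (iterMask d A ℓ m)

/-- The rescaled refinement data `B^[n] = D^n C^[n]` of the Hermite subdivision
scheme `S(A^[ℓ+n] : n ≥ 0)` applied to matrix initial data `δ I`:
`B^[0] = δ I`, `B^[n+1]_j = ∑_k A^[ℓ+n]_{j-2k} B^[n]_k`. -/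
noncomputable def refineB (d : ℕ) (A : ℕ → ℤ → Matrix (Fin (d+1)) (Fin (d+1)) ℝ)
    (ℓ : ℕ) : ℕ → ℤ → Matrix (Fin (d+1)) (Fin (d+1)) ℝ
  | 0 => fun k => if k = 0 then 1 else 0
  | n + 1 => fun j => ∑ᶠ k : ℤ, A (ℓ + n) (j - 2 * k) * refineB d A ℓ n k

open Filter Topology Function

lemma hasFiniteSupport_comp_sub_two_mul_mul {M : Type*} [MulZeroClass M] {B : ℤ → M}
    (hB : B.HasFiniteSupport) (j : ℤ) (X : ℤ → M) :
    (fun m => B (j - 2 * m) * X m).HasFiniteSupport :=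
  (hB.preimage (f := fun m => j - 2 * m) (fun a _ b _ h => by simp_all)).subset
    (support_mul_subset_left _ _)

section refineB

variable {d : ℕ} {A : ℕ → ℤ → Matrix (Fin (d+1)) (Fin (d+1)) ℝ}

lemma refineB_one (ℓ : ℕ) (j : ℤ) : refineB d A ℓ 1 j = A ℓ j := by
  change ∑ᶠ k : ℤ, A (ℓ + 0) (j - 2 * k) * refineB d A ℓ 0 k = A ℓ j
  rw [finsum_eq_single _ 0 fun k hk => by simp [refineB, hk]]
  simp [refineB]

lemma refineB_succ_apply_sub_two_pow_mul (ℓ n : ℕ) (j k : ℤ) :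
    refineB d A ℓ (n + 1) (j - 2 ^ (n + 1) * k) =
      ∑ᶠ m : ℤ, A (ℓ + n) (j - 2 * m) * refineB d A ℓ n (m - 2 ^ n * k) := by
  rw [refineB, ← finsum_comp_equiv (Equiv.addRight (2 ^ n * k))]
  refine finsum_congr fun m => ?_
  simp only [Equiv.coe_addRight, add_sub_cancel_right]
  ring_nf

lemma refineB_succ_eq_finsum_refineB_level_succ
    (hA : ∀ n, (support (A n)).Finite) (ℓ n : ℕ) (j : ℤ) :
    refineB d A ℓ (n + 1) j = ∑ᶠ k : ℤ, refineB d A (ℓ + 1) n (j - 2 ^ n * k) * A ℓ k := by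
  have hs : support (A ℓ) ⊆ (hA ℓ).toFinset := by simp
  induction n generalizing j with
  | zero =>
    rw [refineB_one, finsum_eq_single _ j fun k hk => by simp [refineB, sub_eq_zero, Ne.symm hk]]
    simp [refineB]
  | succ n ih =>
    calc refineB d A ℓ (n + 2) j
        = ∑ᶠ m : ℤ, ∑ k ∈ (hA ℓ).toFinset,
            A (ℓ + (n + 1)) (j - 2 * m) * refineB d A (ℓ + 1) n (m - 2 ^ n * k) * A ℓ k := by
          refine finsum_congr fun m => ?_
          rw [ih, finsum_eq_finsetSum_of_support_subset _
            ((support_mul_subset_right _ _).trans hs), Finset.mul_sum]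
          simp only [mul_assoc]
      _ = ∑ k ∈ (hA ℓ).toFinset, (∑ᶠ m : ℤ,
            A (ℓ + (n + 1)) (j - 2 * m) * refineB d A (ℓ + 1) n (m - 2 ^ n * k)) * A ℓ k := by
          rw [finsum_sum_comm _ _ fun k _ => ?_]
          · refine Finset.sum_congr rfl fun k _ => (finsum_mul' _ _ ?_).symm
            exact hasFiniteSupport_comp_sub_two_mul_mul (hA _) j _
          · exact (hasFiniteSupport_comp_sub_two_mul_mul (hA _) j _).mul_left _
      _ = ∑ᶠ k : ℤ, refineB d A (ℓ + 1) (n + 1) (j - 2 ^ (n + 1) * k) * A ℓ k := by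
          rw [finsum_eq_finsetSum_of_support_subset _ ((support_mul_subset_right _ _).trans hs)]
          refine Finset.sum_congr rfl fun k _ => ?_
          rw [refineB_succ_apply_sub_two_pow_mul, add_right_comm, add_assoc]

end refineB

lemma tendsto_floor_two_pow_mul_div (t : ℝ) :
    Tendsto (fun n : ℕ => (⌊(2 : ℝ) ^ n * t⌋ : ℝ) / 2 ^ n) atTop (𝓝 t) := by
  have hlower : Tendsto (fun n : ℕ => t - ((2 : ℝ) ^ n)⁻¹) atTop (𝓝 t) := by
    simpa using tendsto_const_nhds.sub
      (tendsto_inv_atTop_zero.comp (tendsto_pow_atTop_atTop_of_one_lt (one_lt_two (α := ℝ))))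
  refine tendsto_of_tendsto_of_tendsto_of_le_of_le hlower tendsto_const_nhds
    (fun n => ?_) (fun n => ?_)
  · rw [le_div_iff₀ (by positivity), sub_mul, inv_mul_cancel₀ (by positivity), mul_comm]
    exact (Int.sub_one_lt_floor _).le
  · rw [div_le_iff₀ (by positivity), mul_comm]
    exact Int.floor_le _

lemma tendsto_apply_of_dyadic_uniform {ι κ : Type*} {G : ℕ → ℤ → Matrix ι κ ℝ}
    {f : ℝ → Matrix ι κ ℝ} (hf : Continuous f)
    (hG : ∀ ε > (0 : ℝ), ∃ N : ℕ, ∀ n ≥ N, ∀ j : ℤ, ∀ a b,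
      |(G n j - f ((j : ℝ) / 2 ^ n)) a b| ≤ ε)
    {j : ℕ → ℤ} {t : ℝ} (hj : Tendsto (fun n => (j n : ℝ) / 2 ^ n) atTop (𝓝 t)) :
    Tendsto (fun n => G n (j n)) atTop (𝓝 (f t)) := by
  have herr : Tendsto (fun n => G n (j n) - f ((j n : ℝ) / 2 ^ n)) atTop (𝓝 0) := by
    refine tendsto_pi_nhds.2 fun a => tendsto_pi_nhds.2 fun b => ?_
    refine Metric.tendsto_atTop.2 fun ε hε => ?_
    obtain ⟨N, hN⟩ := hG (ε / 2) (half_pos hε)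
    exact ⟨N, fun n hn => by
      simpa [Real.dist_eq] using (hN n hn (j n) a b).trans_lt (half_lt_self hε : ε / 2 < ε)⟩
  simpa using herr.add ((hf.tendsto t).comp hj)

/-- if for each `ℓ` the scheme `S(A^[n+ℓ] : n ≥ 0)` is convergent
with (continuous) basic limit function `F^[ℓ]` — i.e. the refinements
`C^[n] = D^{-n} B^[n]` converge to `F^[ℓ]` uniformly on the dyadic grids —
then the level-dependent refinement equation
`F^[ℓ] = ∑_k D⁻¹ F^[ℓ+1](2·-k) A^[ℓ]_k` holds. -/
theorem refinement_equation (d : ℕ)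
    (A : ℕ → ℤ → Matrix (Fin (d+1)) (Fin (d+1)) ℝ)
    (hA : ∀ n, (Function.support (A n)).Finite)
    (F : ℕ → ℝ → Matrix (Fin (d+1)) (Fin (d+1)) ℝ)
    (hFcont : ∀ ℓ, Continuous (F ℓ))
    (hconv : ∀ ℓ : ℕ, ∀ ε > (0 : ℝ), ∃ N : ℕ, ∀ n ≥ N, ∀ j : ℤ,
      ∀ a b : Fin (d+1),
        |(((Dmat d)⁻¹ ^ n * refineB d A ℓ n j) - F ℓ ((j : ℝ) / 2 ^ n)) a b| ≤ ε) :
    ∀ ℓ : ℕ, ∀ t : ℝ,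
      F ℓ t = ∑ᶠ k : ℤ, (Dmat d)⁻¹ * F (ℓ + 1) (2 * t - (k : ℝ)) * A ℓ k := by
  intro ℓ t
  set s := (hA ℓ).toFinset
  have hs : support (A ℓ) ⊆ s := by simp [s]
  set j : ℕ → ℤ := fun n => ⌊(2 : ℝ) ^ (n + 1) * t⌋
  have hj : Tendsto (fun n => (j n : ℝ) / 2 ^ (n + 1)) atTop (𝓝 t) :=
    (tendsto_floor_two_pow_mul_div t).comp (tendsto_add_atTop_nat 1)
  have hleft : Tendsto (fun n => (Dmat d)⁻¹ ^ (n + 1) * refineB d A ℓ (n + 1) (j n))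
      atTop (𝓝 (F ℓ t)) :=
    (tendsto_apply_of_dyadic_uniform (hFcont ℓ) (hconv ℓ)
      (tendsto_floor_two_pow_mul_div t)).comp (tendsto_add_atTop_nat 1)
  have hright (k : ℤ) :
      Tendsto (fun n => (Dmat d)⁻¹ ^ n * refineB d A (ℓ + 1) n (j n - 2 ^ n * k))
        atTop (𝓝 (F (ℓ + 1) (2 * t - k))) := by
    refine tendsto_apply_of_dyadic_uniform (hFcont _) (hconv _) ?_
    refine ((hj.const_mul 2).sub_const (k : ℝ)).congr fun n => ?_
    push_cast
    field_simp
    ring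
  have hstep (n : ℕ) : (Dmat d)⁻¹ ^ (n + 1) * refineB d A ℓ (n + 1) (j n) =
      ∑ k ∈ s, (Dmat d)⁻¹ * ((Dmat d)⁻¹ ^ n * refineB d A (ℓ + 1) n (j n - 2 ^ n * k)) * A ℓ k := by
    rw [refineB_succ_eq_finsum_refineB_level_succ hA, finsum_eq_finsetSum_of_support_subset _
      ((support_mul_subset_right _ _).trans hs), Finset.mul_sum, pow_succ']
    simp only [mul_assoc]
  rw [finsum_eq_finsetSum_of_support_subset _ ((support_mul_subset_right _ _).trans hs)]
  refine tendsto_nhds_unique (hleft.congr hstep) (tendsto_finsetSum _ fun k _ => ?_)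
  exact (((continuous_const.matrix_mul continuous_id).matrix_mul continuous_const).tendsto _).comp
    (hright k)
end
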